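/- Suppose A, B ⊆ ℕ are both non-c.e. and form a Kalimullin pair. Then A is enumeration reducible to the complement of B, and B is enumeration reducible to the complement of A. -/

import Mathlib

/-- Canonical computable coding of finite subsets of ℕ. -/
def Kfin (x : ℕ) : Finset ℕ := Denumerable.ofNat (Finset ℕ) x

/-- `s` is a selector function for the set `S`. -/
def Selector (S : Set ℕ) (s : ℕ → ℕ → ℕ) : Prop :=
  (∀ x y, s x y = x ∨ s x y = y) ∧ ∀ x y, (x ∈ S ∨ y ∈ S) → s x y ∈ S

/-- A set is semicomputable iff it has a total computable selector function. -/
def SemiComputable (S : Set ℕ) : Prop :=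
  ∃ s : ℕ → ℕ → ℕ, Computable₂ s ∧ Selector S s

/-- Computable join of two sets of naturals. -/
def join (A B : Set ℕ) : Set ℕ :=
  {n | ∃ a ∈ A, n = 2 * a} ∪ {n | ∃ b ∈ B, n = 2 * b + 1}

/-- Enumeration reducibility on subsets of ℕ. -/
def EnumReducible (A B : Set ℕ) : Prop :=
  ∃ Φ : Set (ℕ × ℕ), REPred (· ∈ Φ) ∧
    ∀ x, x ∈ A ↔ ∃ d, (x, d) ∈ Φ ∧ (↑(Kfin d) : Set ℕ) ⊆ B

/-- A Kalimullin pair with a c.e. witness. -/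
def KPair (A B : Set ℕ) : Prop :=
  ∃ W : Set (ℕ × ℕ), REPred (· ∈ W) ∧
    (∀ a ∈ A, ∀ b ∈ B, (a, b) ∈ W) ∧ (∀ a ∉ A, ∀ b ∉ B, (a, b) ∉ W)

/-- The binary (strict) ordering on subsets of ℕ. -/
def bLt (A B : Set ℕ) : Prop :=
  ∃ β : ℕ, β ∉ A ∧ β ∈ B ∧ ∀ x < β, (x ∈ A ↔ x ∈ B)

/-- The binary (non-strict) ordering on subsets of ℕ. -/
def bLe (A B : Set ℕ) : Prop := bLt A B ∨ A = B

/-!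
If `W` witnesses the Kalimullin pair and `a ∈ A`, the section `{b | (a, b) ∈ W}` is a c.e. superset
of `B`, hence a proper one since `B` is not c.e.; if the section meets `Bᶜ`, then `a ∈ A` because `W`
avoids `Aᶜ × Bᶜ`. So `A = {a | ∃ b ∉ B, (a, b) ∈ W}`, an enumeration reduction of `A` to `Bᶜ` with
singleton axioms `(a, {b})`. The pair `(B, A)` is again a Kalimullin pair.
-/

namespace REPred

variable {α β : Type*} [Primcodable α] [Primcodable β]

theorem comp {p : β → Prop} (hp : REPred p) {f : α → β} (hf : Computable f) :
    REPred fun a => p (f a) :=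
  Partrec.comp hp hf

theorem exists_mem_option {p : α → β → Prop} (hp : REPred fun x : α × β => p x.1 x.2)
    {o : α → Option β} (ho : Computable o) : REPred fun a => ∃ b ∈ o a, p a b := by
  refine ((Computable.ofOption ho).bind
    (g := fun a b => Part.assert (p a b) fun _ => Part.some ()) hp).dom_re.of_eq fun a => ?_
  simp [Part.dom_iff_mem, Part.mem_bind_iff, Part.mem_assert_iff]

end REPred

theorem Kfin_pair_zero_succ (b : ℕ) : Kfin (Nat.pair b 0 + 1) = {b} := by
  rw [Kfin, ← Denumerable.ofNat_encode ({b} : Finset ℕ)]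
  congr 1
  simp [Encodable.encode, Denumerable.lower', Denumerable.eqv, Encodable.encodeList]

/-- Inverse of `b ↦ Nat.pair b 0 + 1`, the `Kfin` code of `{b}`. -/
def decodeSingleton (d : ℕ) : Option ℕ :=
  if Nat.pair (d - 1).unpair.1 0 + 1 = d then some (d - 1).unpair.1 else none

theorem decodeSingleton_eq_some_iff {d b : ℕ} :
    decodeSingleton d = some b ↔ d = Nat.pair b 0 + 1 := by
  unfold decodeSingleton
  split_ifs with h
  · rw [Option.some_inj]
    exact ⟨fun hb => hb ▸ h.symm, fun hd => by simp [hd]⟩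
  · simp only [false_iff]
    rintro rfl
    simp at h

theorem primrec_decodeSingleton : Primrec decodeSingleton := by
  have hb : Primrec fun d : ℕ => (d - 1).unpair.1 :=
    Primrec.fst.comp (Primrec.unpair.comp Primrec.pred)
  exact Primrec.ite
    (Primrec.eq.comp (Primrec.succ.comp (Primrec₂.natPair.comp hb (Primrec.const 0))) Primrec.id)
    (Primrec.option_some.comp hb) (Primrec.const none)

theorem enumReducible_of_exists_mem {A C : Set ℕ} {W : Set (ℕ × ℕ)} (hW : REPred (· ∈ W))
    (hA : ∀ a, a ∈ A ↔ ∃ c ∈ C, (a, c) ∈ W) : EnumReducible A C := by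
  refine ⟨{q | ∃ c ∈ decodeSingleton q.2, (q.1, c) ∈ W}, ?_, fun a => ?_⟩
  · exact REPred.exists_mem_option
      (hW.comp ((Computable.fst.comp Computable.fst).pair Computable.snd))
      (primrec_decodeSingleton.to_comp.comp Computable.snd)
  · simp only [hA, Set.mem_ofPred_eq, Option.mem_def, decodeSingleton_eq_some_iff]
    constructor
    · rintro ⟨c, hc, hac⟩
      exact ⟨Nat.pair c 0 + 1, ⟨c, rfl, hac⟩, by simpa [Kfin_pair_zero_succ]⟩
    · rintro ⟨d, ⟨c, rfl, hac⟩, hC⟩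
      exact ⟨c, by simpa [Kfin_pair_zero_succ] using hC, hac⟩

theorem KPair.symm {A B : Set ℕ} (h : KPair A B) : KPair B A := by
  obtain ⟨W, hW, hin, hout⟩ := h
  exact ⟨{q | (q.2, q.1) ∈ W}, hW.comp (Computable.snd.pair Computable.fst),
    fun b hb a ha => hin a ha b hb, fun b hb a ha => hout a ha b hb⟩

theorem KPair.enumReducible_compl {A B : Set ℕ} (h : KPair A B) (hB : ¬REPred (· ∈ B)) :
    EnumReducible A Bᶜ := by
  obtain ⟨W, hW, hin, hout⟩ := h
  refine enumReducible_of_exists_mem hW fun a => ⟨fun ha => ?_, ?_⟩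
  · by_contra hsec
    push Not at hsec
    exact hB (hW.comp ((Computable.const a).pair Computable.id) |>.of_eq fun b =>
      ⟨fun hab => by_contra fun hb => hsec b hb hab, hin a ha b⟩)
  · rintro ⟨b, hb, hab⟩
    by_contra ha
    exact hout a ha b hb hab

theorem kpair_enumReducible_compl (A B : Set ℕ)
    (hA : ¬ REPred (· ∈ A)) (hB : ¬ REPred (· ∈ B)) (h : KPair A B) :
    EnumReducible A Bᶜ ∧ EnumReducible B Aᶜ :=
  ⟨h.enumReducible_compl hB, h.symm.enumReducible_compl hA⟩
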